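/- arXiv:2111.07980 — 8 statements merged into one kernel-verified Lean document; each statement's English description precedes it below -/
import Mathlib

section
/- Let l be a real number, L = !![1, l; 0, 1], P = !![1, 0; -2√2, 1], T = !![1, 0; -√2, 1], and A = (T·L·P·L)³. Then trace(A) = 2 − 54√2·l + 468·l² − 720√2·l³ + 960·l⁴ − 288√2·l⁵ + 64·l⁶. -/
set_option maxRecDepth 8000
set_option maxHeartbeats 2000000


theorem stmt_1 (l : ℝ)
    (L : Matrix (Fin 2) (Fin 2) ℝ) (hL : L = !![1, l; 0, 1])
    (P : Matrix (Fin 2) (Fin 2) ℝ) (hP : P = !![1, 0; -(2 * Real.sqrt 2), 1])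
    (T : Matrix (Fin 2) (Fin 2) ℝ) (hT : T = !![1, 0; -Real.sqrt 2, 1])
    (A : Matrix (Fin 2) (Fin 2) ℝ) (hA : A = (T * L * P * L) ^ 3) :
    Matrix.trace A =
      2 - 54 * Real.sqrt 2 * l + 468 * l ^ 2 - 720 * Real.sqrt 2 * l ^ 3
        + 960 * l ^ 4 - 288 * Real.sqrt 2 * l ^ 5 + 64 * l ^ 6 := by
  have h2 : Real.sqrt 2 ^ 2 = 2 := Real.sq_sqrt (by norm_num)
  set s := Real.sqrt 2 with hs
  subst hA hL hP hT
  rw [pow_succ, pow_succ, pow_one]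
  simp only [Matrix.mul_fin_two, Matrix.trace_fin_two_of]
  linear_combination (234 * l ^ 2 - 360 * l ^ 3 * s + 480 * l ^ 4
    + 240 * l ^ 4 * s ^ 2 - 144 * l ^ 5 * s - 72 * l ^ 5 * s ^ 3
    + 32 * l ^ 6 + 16 * l ^ 6 * s ^ 2 + 8 * l ^ 6 * s ^ 4) * h2
end

section
/- Define f(l) = 2 − 54√2·l + 468·l² − 720√2·l³ + 960·l⁴ − 288√2·l⁵ + 64·l⁶ for real l. If l > 0 and −2 < f(l) < 2, then either 0 < l < √2/2 or √2 < l < 3√2/2. -/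
theorem stmt_3 (f : ℝ → ℝ)
    (hf : ∀ l : ℝ, f l = 2 - 54 * Real.sqrt 2 * l + 468 * l ^ 2 - 720 * Real.sqrt 2 * l ^ 3
        + 960 * l ^ 4 - 288 * Real.sqrt 2 * l ^ 5 + 64 * l ^ 6)
    (l : ℝ) (hl : 0 < l) (h1 : -2 < f l) (h2 : f l < 2) :
    (0 < l ∧ l < Real.sqrt 2 / 2) ∨ (Real.sqrt 2 < l ∧ l < 3 * Real.sqrt 2 / 2) := by
  set s := Real.sqrt 2 with hs_def
  have hs : s ^ 2 = 2 := Real.sq_sqrt (by norm_num)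
  have hspos : 0 < s := Real.sqrt_pos.mpr (by norm_num)
  set m : ℝ := 4 * l ^ 2 - 6 * s * l + 2 with hm
  have key1 : f l - 2 = (m - 2) * (m + 1) ^ 2 := by
    rw [hf l, hm]
    linear_combination (-432 * l ^ 4 + 216 * s * l ^ 3 - 216 * l ^ 2) * hs
  have key2 : f l + 2 = (m + 2) * (m - 1) ^ 2 := by
    rw [hf l, hm]
    linear_combination (-432 * l ^ 4 + 216 * s * l ^ 3 - 216 * l ^ 2) * hs
  -- from h2 : (m-2)(m+1)^2 < 0, deduce m < 2
  have hm2 : m < 2 := by nlinarith [sq_nonneg (m + 1), sq_nonneg (m - 2)]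
  -- from h1 : (m+2)(m-1)^2 > 0, deduce m > -2
  have hm1 : -2 < m := by nlinarith [sq_nonneg (m - 1), sq_nonneg (m + 2)]
  -- m < 2 gives l < 3s/2
  have hup : l < 3 * s / 2 := by nlinarith
  -- m > -2 gives (2l - s)(2l - 2s) > 0
  have hprod : 0 < (2 * l - s) * (2 * l - 2 * s) := by nlinarith
  rcases mul_pos_iff.mp hprod with ⟨ha, hb⟩ | ⟨ha, hb⟩
  · exact Or.inr ⟨by linarith, hup⟩
  · exact Or.inl ⟨hl, by linarith⟩
end

section
/- Define f(l) = 2 − 54√2·l + 468·l² − 720√2·l³ + 960·l⁴ − 288√2·l⁵ + 64·l⁶. For every l in the open interval (√2, 3√2/2) with l ≠ (3√2 + √6)/4 and l ≠ (3√2 + √14)/4, one has −2 < f(l) < 2. Moreover f((3√2 + √6)/4) = 2 and f((3√2 + √14)/4) = −2. -/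
theorem stmt_4 (f : ℝ → ℝ)
    (hf : ∀ l : ℝ, f l = 2 - 54 * Real.sqrt 2 * l + 468 * l ^ 2 - 720 * Real.sqrt 2 * l ^ 3
        + 960 * l ^ 4 - 288 * Real.sqrt 2 * l ^ 5 + 64 * l ^ 6) :
    (∀ l : ℝ, Real.sqrt 2 < l → l < 3 * Real.sqrt 2 / 2 →
      l ≠ (3 * Real.sqrt 2 + Real.sqrt 6) / 4 → l ≠ (3 * Real.sqrt 2 + Real.sqrt 14) / 4 →
      -2 < f l ∧ f l < 2) ∧
    f ((3 * Real.sqrt 2 + Real.sqrt 6) / 4) = 2 ∧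
    f ((3 * Real.sqrt 2 + Real.sqrt 14) / 4) = -2 := by
  set a := Real.sqrt 2 with ha'
  have ha : a ^ 2 = 2 := Real.sq_sqrt (by norm_num)
  have ha0 : (0:ℝ) < a := Real.sqrt_pos.mpr (by norm_num)
  have hb : Real.sqrt 6 ^ 2 = 6 := Real.sq_sqrt (by norm_num)
  have hb0 : (0:ℝ) < Real.sqrt 6 := Real.sqrt_pos.mpr (by norm_num)
  have hc : Real.sqrt 14 ^ 2 = 14 := Real.sq_sqrt (by norm_num)
  have hc0 : (0:ℝ) < Real.sqrt 14 := Real.sqrt_pos.mpr (by norm_num)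
  -- key factorization identities
  have keyA : ∀ l : ℝ, f l - 2 =
      2 * a * l * (4 * l ^ 2 - 6 * a * l + 3) ^ 2 * (a * l - 3) := by
    intro l
    rw [hf l]
    linear_combination ((-234) * l ^ 2 + (-480) * l ^ 4 + (-32) * l ^ 6 + 288 * a * l ^ 3
      + 96 * a * l ^ 5 + (-72) * a ^ 2 * l ^ 4) * ha
  have keyB : ∀ l : ℝ, f l + 2 =
      2 * a * (4 * l ^ 2 - 6 * a * l + 1) ^ 2 * (a * l - 1) * (l - a) := by
    intro l
    rw [hf l]
    linear_combination ((-2) + (-234) * l ^ 2 + (-480) * l ^ 4 + (-32) * l ^ 6 + 26 * a * l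
      + 352 * a * l ^ 3 + 128 * a * l ^ 5 + (-96) * a ^ 2 * l ^ 2 + (-168) * a ^ 2 * l ^ 4
      + 72 * a ^ 3 * l ^ 3) * ha
  refine ⟨?_, ?_, ?_⟩
  · intro l hl1 hl2 hne1 hne2
    have hl0 : 0 < l := lt_trans ha0 hl1
    constructor
    · -- f l > -2 : f l + 2 > 0
      have hQ : 4 * l ^ 2 - 6 * a * l + 1 ≠ 0 := by
        intro h
        have hfac : (4 * l - (3 * a + Real.sqrt 14)) * (4 * l - (3 * a - Real.sqrt 14)) = 0 := by
          linear_combination 4 * h + 9 * ha - hc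
        rcases mul_eq_zero.mp hfac with h1 | h2
        · exact hne1 (by exact absurd (by linarith : l = (3 * a + Real.sqrt 14) / 4) hne2)
        · nlinarith
      have h1 : 0 < a * l - 1 := by nlinarith
      have h2 : 0 < l - a := by linarith
      have h3 : 0 < (4 * l ^ 2 - 6 * a * l + 1) ^ 2 := by positivity
      have hpos : 0 < 2 * a * (4 * l ^ 2 - 6 * a * l + 1) ^ 2 * (a * l - 1) * (l - a) :=
        mul_pos (mul_pos (mul_pos (by positivity) h3) h1) h2
      linarith [keyB l]
    · -- f l < 2 : f l - 2 < 0
      have hQ : 4 * l ^ 2 - 6 * a * l + 3 ≠ 0 := by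
        intro h
        have hfac : (4 * l - (3 * a + Real.sqrt 6)) * (4 * l - (3 * a - Real.sqrt 6)) = 0 := by
          linear_combination 4 * h + 9 * ha - hb
        rcases mul_eq_zero.mp hfac with h1 | h2
        · exact hne1 (by linarith)
        · nlinarith
      have h1 : a * l - 3 < 0 := by nlinarith
      have h3 : 0 < (4 * l ^ 2 - 6 * a * l + 3) ^ 2 := by positivity
      have hneg : 2 * a * l * (4 * l ^ 2 - 6 * a * l + 3) ^ 2 * (a * l - 3) < 0 :=
        mul_neg_of_pos_of_neg (mul_pos (mul_pos (by positivity) hl0) h3) h1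
      linarith [keyA l]
  · have hz : 4 * ((3 * a + Real.sqrt 6) / 4) ^ 2 - 6 * a * ((3 * a + Real.sqrt 6) / 4) + 3 = 0 := by
      linear_combination (-9/4) * ha + (1/4) * hb
    have := keyA ((3 * a + Real.sqrt 6) / 4)
    rw [hz] at this
    linarith [this]
  · have hz : 4 * ((3 * a + Real.sqrt 14) / 4) ^ 2 - 6 * a * ((3 * a + Real.sqrt 14) / 4) + 1 = 0 := by
      linear_combination (-9/4) * ha + (1/4) * hc
    have := keyB ((3 * a + Real.sqrt 14) / 4)
    rw [hz] at this
    linarith [this]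
end

section
/- Define f(l) = 2 − 54√2·l + 468·l² − 720√2·l³ + 960·l⁴ − 288√2·l⁵ + 64·l⁶. For every l in the open interval (0, √2/2) with l ≠ (3√2 − √6)/4 and l ≠ (3√2 − √14)/4, one has −2 < f(l) < 2. Moreover f((3√2 − √6)/4) = 2 and f((3√2 − √14)/4) = −2. -/
theorem stmt_5 (f : ℝ → ℝ)
    (hf : ∀ l : ℝ, f l = 2 - 54 * Real.sqrt 2 * l + 468 * l ^ 2 - 720 * Real.sqrt 2 * l ^ 3
        + 960 * l ^ 4 - 288 * Real.sqrt 2 * l ^ 5 + 64 * l ^ 6) :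
    (∀ l : ℝ, 0 < l → l < Real.sqrt 2 / 2 →
      l ≠ (3 * Real.sqrt 2 - Real.sqrt 6) / 4 → l ≠ (3 * Real.sqrt 2 - Real.sqrt 14) / 4 →
      -2 < f l ∧ f l < 2) ∧
    f ((3 * Real.sqrt 2 - Real.sqrt 6) / 4) = 2 ∧
    f ((3 * Real.sqrt 2 - Real.sqrt 14) / 4) = -2 := by
  set s := Real.sqrt 2 with hs_def
  have hs2 : s ^ 2 = 2 := Real.sq_sqrt (by norm_num)
  have hs_pos : 0 < s := Real.sqrt_pos.mpr (by norm_num)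
  have h6 : Real.sqrt 6 ^ 2 = 6 := Real.sq_sqrt (by norm_num)
  have h6pos : 0 < Real.sqrt 6 := Real.sqrt_pos.mpr (by norm_num)
  have h14 : Real.sqrt 14 ^ 2 = 14 := Real.sq_sqrt (by norm_num)
  have h14pos : 0 < Real.sqrt 14 := Real.sqrt_pos.mpr (by norm_num)
  have key : ∀ l : ℝ, f l = (2 - 6*s*l + 4*l^2)^3 - 3*(2 - 6*s*l + 4*l^2) := by
    intro l
    rw [hf]
    linear_combination (-216*l^2 + 216*s*l^3 - 432*l^4) * hs2
  refine ⟨?_, ?_, ?_⟩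
  · intro l hl0 hl1 hne1 hne2
    set t : ℝ := 2 - 6*s*l + 4*l^2 with ht_def
    have hls : l < s := lt_trans hl1 (by linarith)
    have ht2 : t < 2 := by nlinarith
    have htm2 : -2 < t := by nlinarith
    have ht1 : t + 1 ≠ 0 := by
      intro h
      have hfac : t + 1 = 4 * (l - (3*s - Real.sqrt 6)/4) * (l - (3*s + Real.sqrt 6)/4) := by
        rw [ht_def]
        linear_combination (-9/4 : ℝ) * hs2 + (1/4 : ℝ) * h6
      have h2 : l - (3*s + Real.sqrt 6)/4 < 0 := by linarith
      have h1 : l - (3*s - Real.sqrt 6)/4 ≠ 0 := sub_ne_zero.mpr hne1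
      rcases lt_or_gt_of_ne h1 with h | h
      · nlinarith
      · nlinarith
    have htm1 : t - 1 ≠ 0 := by
      intro h
      have hfac : t - 1 = 4 * (l - (3*s - Real.sqrt 14)/4) * (l - (3*s + Real.sqrt 14)/4) := by
        rw [ht_def]
        linear_combination (-9/4 : ℝ) * hs2 + (1/4 : ℝ) * h14
      have h2 : l - (3*s + Real.sqrt 14)/4 < 0 := by linarith
      have h1 : l - (3*s - Real.sqrt 14)/4 ≠ 0 := sub_ne_zero.mpr hne2
      rcases lt_or_gt_of_ne h1 with h | h
      · nlinarith
      · nlinarith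
    have hsq1 : 0 < (t + 1)^2 := by positivity
    have hsq2 : 0 < (t - 1)^2 := by positivity
    have hfl : f l = t^3 - 3*t := key l
    constructor
    · -- f l + 2 = (t+2)(t-1)^2 > 0
      nlinarith [mul_pos (by linarith : (0:ℝ) < t + 2) hsq2]
    · -- f l - 2 = (t-2)(t+1)^2 < 0
      nlinarith [mul_pos (by linarith : (0:ℝ) < 2 - t) hsq1]
  · rw [key]
    have ht : 2 - 6*s*((3*s - Real.sqrt 6)/4) + 4*((3*s - Real.sqrt 6)/4)^2 = -1 := by
      linear_combination (-9/4 : ℝ) * hs2 + (1/4 : ℝ) * h6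
    rw [ht]; norm_num
  · rw [key]
    have ht : 2 - 6*s*((3*s - Real.sqrt 14)/4) + 4*((3*s - Real.sqrt 14)/4)^2 = 1 := by
      linear_combination (-9/4 : ℝ) * hs2 + (1/4 : ℝ) * h14
    rw [ht]; norm_num
end

section
/- There exists a real number l with l > √2 such that, setting L = !![1, l; 0, 1], P = !![1, 0; -2√2, 1], T = !![1, 0; -√2, 1] and A = (T·L·P·L)³, one has −2 < trace(A) < 2. -/
theorem stmt_6 :
    ∃ l : ℝ, Real.sqrt 2 < l ∧
      -2 < Matrix.trace ((!![1, 0; -Real.sqrt 2, 1] * !![1, l; 0, 1] *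
            !![1, 0; -(2 * Real.sqrt 2), 1] * !![1, l; 0, 1]) ^ 3) ∧
      Matrix.trace ((!![1, 0; -Real.sqrt 2, 1] * !![1, l; 0, 1] *
            !![1, 0; -(2 * Real.sqrt 2), 1] * !![1, l; 0, 1]) ^ 3) < 2 := by
  refine ⟨3/2, ?_, ?_, ?_⟩
  · nlinarith [Real.sq_sqrt (by norm_num : (2:ℝ) ≥ 0), Real.sqrt_nonneg 2]
  all_goals
    have hs : Real.sqrt 2 ^ 2 = 2 := Real.sq_sqrt (by norm_num)
    have h1 : Real.sqrt 2 < 1.4143 := by nlinarith [Real.sqrt_nonneg 2]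
    have h2 : (1.414:ℝ) < Real.sqrt 2 := by nlinarith [Real.sqrt_nonneg 2]
    have h3 : Real.sqrt 2 ^ 3 = 2 * Real.sqrt 2 := by
      rw [pow_succ, hs]
    have h4 : Real.sqrt 2 ^ 4 = 4 := by rw [show (4:ℕ)=2*2 by rfl, pow_mul, hs]; norm_num
    have h5 : Real.sqrt 2 ^ 5 = 4 * Real.sqrt 2 := by rw [pow_succ, h4]
    have h6 : Real.sqrt 2 ^ 6 = 8 := by rw [pow_succ, h5, mul_assoc, Real.mul_self_sqrt (by norm_num : (0:ℝ) ≤ 2)]; norm_num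
    simp only [pow_succ, pow_zero, one_mul, Matrix.mul_fin_two, Matrix.trace_fin_two_of]
    ring_nf
    rw [hs, h3, h4, h5, h6]
    linarith
end

section
/- Let φ ∈ (0, π/2), write c = cos φ, let l be real, and set L = !![1, l; 0, 1], P_φ = !![1, 0; -2/c, 1], T_φ = !![1, 0; -2c, 1], A = (T_φ·L·P_φ·L)³. Then trace(A) = 2 − 36·(1/c + c)·l + (228 + 96·(1/c² + c²))·l² − 64·(1/c³ + c³ + 6/c + 6c)·l³ + (480 + 192·(1/c² + c²))·l⁴ − 192·(1/c + c)·l⁵ + 64·l⁶. -/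
theorem stmt_11 (φ : ℝ) (hφ : φ ∈ Set.Ioo 0 (Real.pi / 2)) (c : ℝ) (hc : c = Real.cos φ)
    (l : ℝ)
    (L : Matrix (Fin 2) (Fin 2) ℝ) (hL : L = !![1, l; 0, 1])
    (Pφ : Matrix (Fin 2) (Fin 2) ℝ) (hP : Pφ = !![1, 0; -(2 / c), 1])
    (Tφ : Matrix (Fin 2) (Fin 2) ℝ) (hT : Tφ = !![1, 0; -(2 * c), 1])
    (A : Matrix (Fin 2) (Fin 2) ℝ) (hA : A = (Tφ * L * Pφ * L) ^ 3) :
    Matrix.trace A =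
      2 - 36 * (1 / c + c) * l
        + (228 + 96 * (1 / c ^ 2 + c ^ 2)) * l ^ 2
        - 64 * (1 / c ^ 3 + c ^ 3 + 6 / c + 6 * c) * l ^ 3
        + (480 + 192 * (1 / c ^ 2 + c ^ 2)) * l ^ 4
        - 192 * (1 / c + c) * l ^ 5 + 64 * l ^ 6 := by
  have hcpos : 0 < c := hc ▸ Real.cos_pos_of_mem_Ioo ⟨by linarith [hφ.1, Real.pi_pos], hφ.2⟩
  have hc0 : c ≠ 0 := ne_of_gt hcpos
  subst hA hL hP hT
  rw [pow_succ, pow_succ, pow_one]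
  simp [Matrix.mul_fin_two, Matrix.trace_fin_two]
  field_simp
  ring
end

section
/- Let φ ∈ (π/4, π/2) and write c = cos φ. Define g(l) = 2 − 36·(1/c + c)·l + (228 + 96·(1/c² + c²))·l² − 64·(1/c³ + c³ + 6/c + 6c)·l³ + (480 + 192·(1/c² + c²))·l⁴ − 192·(1/c + c)·l⁵ + 64·l⁶. Then there exists ε > 0 such that for all l with 1/c < l < 1/c + ε, one has −2 < g(l) < 2. -/
theorem stmt_14 (φ : ℝ) (hφ : φ ∈ Set.Ioo (Real.pi / 4) (Real.pi / 2))
    (c : ℝ) (hc : c = Real.cos φ)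
    (g : ℝ → ℝ)
    (hg : ∀ l : ℝ, g l = 2 - 36 * (1 / c + c) * l
        + (228 + 96 * (1 / c ^ 2 + c ^ 2)) * l ^ 2
        - 64 * (1 / c ^ 3 + c ^ 3 + 6 / c + 6 * c) * l ^ 3
        + (480 + 192 * (1 / c ^ 2 + c ^ 2)) * l ^ 4
        - 192 * (1 / c + c) * l ^ 5 + 64 * l ^ 6) :
    ∃ ε > 0, ∀ l : ℝ, 1 / c < l → l < 1 / c + ε → -2 < g l ∧ g l < 2 := by
  obtain ⟨h1, h2⟩ := hφ
  have hpi := Real.pi_pos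
  have hc0 : 0 < c := by
    rw [hc]
    apply Real.cos_pos_of_mem_Ioo
    constructor <;> nlinarith
  have hc1 : c < 1 := by
    rw [hc]
    calc Real.cos φ < Real.cos (Real.pi / 4) := by
          apply Real.cos_lt_cos_of_nonneg_of_le_pi <;> nlinarith
      _ < 1 := by
          rw [Real.cos_pi_div_four]
          nlinarith [Real.sq_sqrt (by norm_num : (2:ℝ) ≥ 0),
            Real.sqrt_nonneg 2]
  have hcne : c ≠ 0 := ne_of_gt hc0
  have hclt : c < 1 / c := by
    rw [lt_div_iff₀ hc0]; nlinarith
  -- factorization of g + 2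
  have hfac : ∀ l : ℝ, g l + 2
      = (l - c) * (l - 1 / c) * (8 * l ^ 2 - 8 * (c + 1 / c) * l + 2) ^ 2 := by
    intro l
    rw [hg l]
    field_simp
    ring
  -- value of g at 1/c
  have hval : g (1 / c) = -2 := by
    have h := hfac (1 / c)
    rw [sub_self (1 / c), mul_zero, zero_mul] at h
    linarith
  -- continuity facts
  have hgf : g = fun l : ℝ => 2 - 36 * (1 / c + c) * l
        + (228 + 96 * (1 / c ^ 2 + c ^ 2)) * l ^ 2
        - 64 * (1 / c ^ 3 + c ^ 3 + 6 / c + 6 * c) * l ^ 3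
        + (480 + 192 * (1 / c ^ 2 + c ^ 2)) * l ^ 4
        - 192 * (1 / c + c) * l ^ 5 + 64 * l ^ 6 := funext hg
  have hcontg : ContinuousAt g (1 / c) := by
    rw [hgf]; fun_prop
  have hconth : ContinuousAt (fun l : ℝ => 8 * l ^ 2 - 8 * (c + 1 / c) * l + 2) (1 / c) := by
    fun_prop
  have hhval : (8 * (1 / c) ^ 2 - 8 * (c + 1 / c) * (1 / c) + 2) = -6 := by
    field_simp
    ring
  obtain ⟨δ₁, hδ₁pos, hδ₁⟩ := Metric.continuousAt_iff.mp hcontg 4 (by norm_num)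
  obtain ⟨δ₂, hδ₂pos, hδ₂⟩ := Metric.continuousAt_iff.mp hconth 6 (by norm_num)
  refine ⟨min δ₁ δ₂, lt_min hδ₁pos hδ₂pos, fun l hl1 hl2 => ?_⟩
  have hdist : dist l (1 / c) < min δ₁ δ₂ := by
    rw [Real.dist_eq, abs_of_pos (by linarith)]
    linarith
  have hd1 := hδ₁ (lt_of_lt_of_le hdist (min_le_left _ _))
  have hd2 := hδ₂ (lt_of_lt_of_le hdist (min_le_right _ _))
  rw [Real.dist_eq, hval] at hd1
  rw [Real.dist_eq, hhval] at hd2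
  have hd1' := abs_lt.mp hd1
  have hd2' := abs_lt.mp hd2
  constructor
  · -- lower bound from factorization
    have hhneg : 8 * l ^ 2 - 8 * (c + 1 / c) * l + 2 < 0 := by
      linarith [hd2'.2]
    have hsq : (8 * l ^ 2 - 8 * (c + 1 / c) * l + 2) ^ 2 > 0 :=
      pow_pos (abs_pos.mpr (ne_of_lt hhneg)) 2 |>.trans_eq (sq_abs _) |>.trans_le le_rfl
    have hpos : 0 < (l - c) * (l - 1 / c) * (8 * l ^ 2 - 8 * (c + 1 / c) * l + 2) ^ 2 := by
      apply mul_pos (mul_pos (by linarith) (by linarith)) hsq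
    have := hfac l
    linarith
  · linarith [hd1'.2]
end

section
/- For every real number M > 0, there exist φ ∈ (π/4, π/2) and a real number l > M such that, writing c = cos φ and setting L = !![1, l; 0, 1], P_φ = !![1, 0; -2/c, 1], T_φ = !![1, 0; -2c, 1], A = (T_φ·L·P_φ·L)³, one has −2 < trace(A) < 2. -/
lemma key_stmt15 (c l : ℝ) (hc : c ≠ 0) (h : 4*l^2 - 4*l*(c + 1/c) + 2 = 0) :
    Matrix.trace ((!![1, 0; -(2 * c), 1] * !![1, l; 0, 1] *
        !![1, 0; -(2 / c), 1] * !![1, l; 0, 1]) ^ 3) = 0 := by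
  simp only [pow_succ, pow_zero, one_mul, Matrix.mul_fin_two, Matrix.trace_fin_two_of]
  field_simp at h ⊢
  linear_combination ((-(l*4) - l*c^2*4 + l^2*c*4 + c*2)^2 - 3*c^2) * h

theorem stmt_15 (M : ℝ) (hM : 0 < M) :
    ∃ φ ∈ Set.Ioo (Real.pi / 4) (Real.pi / 2), ∃ l : ℝ, M < l ∧
      -2 < Matrix.trace ((!![1, 0; -(2 * Real.cos φ), 1] * !![1, l; 0, 1] *
            !![1, 0; -(2 / Real.cos φ), 1] * !![1, l; 0, 1]) ^ 3) ∧
      Matrix.trace ((!![1, 0; -(2 * Real.cos φ), 1] * !![1, l; 0, 1] *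
            !![1, 0; -(2 / Real.cos φ), 1] * !![1, l; 0, 1]) ^ 3) < 2 := by
  set c : ℝ := 1 / (2*M + 2) with hc_def
  have h0 : 0 < c := by positivity
  have hchalf : c < 1/2 := by
    rw [hc_def, div_lt_div_iff₀ (by linarith) (by norm_num)]; linarith
  have hsqrt2 : (1:ℝ) < Real.sqrt 2 := by
    nlinarith [Real.sq_sqrt (by norm_num : (0:ℝ) ≤ 2), Real.sqrt_nonneg 2]
  have h1 : c < Real.sqrt 2 / 2 := by linarith
  have h2 : c ≤ 1 := by linarith
  have hinv : 1 / c = 2*M + 2 := by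
    rw [hc_def, one_div_one_div]
  set s : ℝ := c + (2*M + 2) with hs_def
  have hs2 : 2 ≤ s := by simp [hs_def]; linarith
  have hs2nn : (0:ℝ) ≤ s^2 - 2 := by nlinarith
  set l : ℝ := (s + Real.sqrt (s^2 - 2)) / 2 with hl_def
  have hsq : Real.sqrt (s^2 - 2) ^ 2 = s^2 - 2 := Real.sq_sqrt hs2nn
  have hsqnn : 0 ≤ Real.sqrt (s^2 - 2) := Real.sqrt_nonneg _
  have hMl : M < l := by
    rw [hl_def]; rw [hs_def] at *; nlinarith
  have hconstraint : 4*l^2 - 4*l*(c + 1/c) + 2 = 0 := by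
    rw [hinv, hl_def]
    have : c + (2*M+2) = s := hs_def.symm
    rw [this]
    nlinarith [hsq]
  refine ⟨Real.arccos c, ⟨?_, ?_⟩, l, hMl, ?_⟩
  · by_contra hle
    push_neg at hle
    have := Real.cos_le_cos_of_nonneg_of_le_pi (Real.arccos_nonneg c)
      (by linarith [Real.pi_pos] : Real.pi/4 ≤ Real.pi) hle
    rw [Real.cos_arccos (by linarith) h2, Real.cos_pi_div_four] at this
    linarith
  · exact Real.arccos_lt_pi_div_two.mpr h0
  · rw [Real.cos_arccos (by linarith) h2,
      key_stmt15 c l (ne_of_gt h0) hconstraint]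
    norm_num
end
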